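/- arXiv:quant-ph/0608125 — 2 statements merged into one kernel-verified Lean document; each statement's English description precedes it below -/
import Mathlib

section
/- Let p̃ : S² → M₃(ℂ) be given by p̃(x)ᵢⱼ = xᵢxⱼ, and let A₋ be the A₊-module of odd continuous functions on S². Then the map A₋ → p̃(A₊³), f ↦ (x ↦ f(x)·x), is an A₊-module isomorphism onto the image p̃(A₊³) of the projector p̃ acting on triples of even functions. -/
noncomputable section

abbrev S2 := Metric.sphere (0 : EuclideanSpace ℝ (Fin 3)) 1

def negS (x : S2) : S2 :=
  ⟨-(x : EuclideanSpace ℝ (Fin 3)), by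
    have hx : ‖(x : EuclideanSpace ℝ (Fin 3))‖ = 1 := mem_sphere_zero_iff_norm.mp x.2
    simp [mem_sphere_zero_iff_norm, hx]⟩

/-- The odd continuous functions on S². -/
def Aminus : Set (S2 → ℂ) := {f | Continuous f ∧ ∀ x, f (negS x) = -f x}

/-- The module p̃(A₊³): continuous ℂ³-valued functions with even components fixed by the
pointwise projector p̃(x)ᵢⱼ = xᵢxⱼ. -/
def pA3 : Set (S2 → Fin 3 → ℂ) :=
  {v | Continuous v ∧ (∀ x, v (negS x) = v x) ∧
    (∀ x i, (∑ j, ((x.1 i * x.1 j : ℝ) : ℂ) * v x j) = v x i)}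

/-- The map f ↦ (x ↦ f(x)·x). -/
def T : (S2 → ℂ) → (S2 → Fin 3 → ℂ) :=
  fun f x i => f x * ((x.1 i : ℝ) : ℂ)

lemma coord_cont (i : Fin 3) : Continuous fun x : S2 => ((x.1 i : ℝ) : ℂ) :=
  Complex.continuous_ofReal.comp
    ((EuclideanSpace.proj i).continuous.comp continuous_subtype_val)

lemma sum_sq (x : S2) : (∑ j, ((x.1 j : ℝ) : ℂ) * ((x.1 j : ℝ) : ℂ)) = 1 := by
  have hx : ‖(x : EuclideanSpace ℝ (Fin 3))‖ = 1 := mem_sphere_zero_iff_norm.mp x.2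
  have h : ∑ j, (x.1 j) ^ 2 = 1 := by
    have := EuclideanSpace.norm_eq (x : EuclideanSpace ℝ (Fin 3))
    rw [hx] at this
    have h2 : ∑ j, ‖x.1 j‖ ^ 2 = 1 := by
      have := congrArg (· ^ 2) this.symm
      simpa [Real.sq_sqrt (Finset.sum_nonneg fun j _ => sq_nonneg _)] using this
    simpa [Real.norm_eq_abs, sq_abs] using h2
  have := congrArg (fun r : ℝ => (r : ℂ)) h
  push_cast at this
  simpa [pow_two] using this

lemma negS_coord (x : S2) (i : Fin 3) : (negS x).1 i = -(x.1 i) := rfl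

/-- T : A₋ → p̃(A₊³), f ↦ f·x, is an A₊-module isomorphism onto p̃(A₊³). -/
theorem stmt5 :
    (∀ f ∈ Aminus, T f ∈ pA3) ∧
    Set.InjOn T Aminus ∧
    T '' Aminus = pA3 ∧
    (∀ g : S2 → ℂ, Continuous g → (∀ x, g (negS x) = g x) →
      ∀ f ∈ Aminus, T (fun x => g x * f x) = fun x i => g x * T f x i) := by
  have hmem : ∀ f ∈ Aminus, T f ∈ pA3 := by
    rintro f ⟨hfc, hfo⟩
    refine ⟨?_, ?_, ?_⟩
    · exact continuous_pi fun i => hfc.mul (coord_cont i)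
    · intro x
      funext i
      simp [T, hfo x, negS_coord]
    · intro x i
      have : (∑ j, ((x.1 i * x.1 j : ℝ) : ℂ) * (f x * ((x.1 j : ℝ) : ℂ)))
          = (f x * ((x.1 i : ℝ) : ℂ)) * ∑ j, ((x.1 j : ℝ) : ℂ) * ((x.1 j : ℝ) : ℂ) := by
        rw [Finset.mul_sum]
        refine Finset.sum_congr rfl fun j _ => by push_cast; ring
      simpa [T, sum_sq x] using this
  have hinj : Set.InjOn T Aminus := by
    rintro f hf g hg h
    funext x
    have hx := sum_sq x
    have h1 : ∀ i, f x * ((x.1 i : ℝ) : ℂ) = g x * ((x.1 i : ℝ) : ℂ) := fun i =>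
      congrFun (congrFun h x) i
    have : f x * (∑ j, ((x.1 j : ℝ) : ℂ) * ((x.1 j : ℝ) : ℂ))
        = g x * (∑ j, ((x.1 j : ℝ) : ℂ) * ((x.1 j : ℝ) : ℂ)) := by
      rw [Finset.mul_sum, Finset.mul_sum]
      exact Finset.sum_congr rfl fun j _ => by rw [← mul_assoc, ← mul_assoc, h1 j]
    simpa [hx] using this
  refine ⟨hmem, hinj, ?_, ?_⟩
  · apply Set.Subset.antisymm
    · rintro _ ⟨f, hf, rfl⟩; exact hmem f hf
    · rintro v ⟨hvc, hve, hvp⟩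
      refine ⟨fun x => ∑ j, ((x.1 j : ℝ) : ℂ) * v x j, ⟨?_, ?_⟩, ?_⟩
      · exact continuous_finset_sum _ fun j _ =>
          (coord_cont j).mul ((continuous_apply j).comp hvc)
      · intro x
        rw [← Finset.sum_neg_distrib]
        refine Finset.sum_congr rfl fun j _ => ?_
        rw [hve x, negS_coord]
        push_cast; ring
      · funext x i
        have := hvp x i
        rw [← this]
        simp only [T, Finset.sum_mul, Finset.mul_sum]
        refine Finset.sum_congr rfl fun j _ => by push_cast; ring
  · intro g hgc hge f hf
    funext x i
    simp [T, mul_assoc]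
end
end

section
/- The A₊-module A₋ is not free of rank 1; equivalently, there is no single odd continuous function f on S² and even function realization making A₋ ≅ A₊ as A₊-modules. In particular, every odd continuous function on S² has a zero. -/
/-!
If an odd `f : S² → ℂ` never vanished, pull it back along `planeToSphere : ℂ → S²`, which sends
the unit circle onto the equator, commuting with the antipodal maps there. As `ℂ` is simply
connected, `f ∘ planeToSphere = exp ∘ θ` for a continuous `θ`. On the circle `d z = θ (-z) - θ z`
satisfies `exp ∘ d = -1`, so `d` is constant by connectedness; but `d` is odd, hence `0`, and
`exp 0 ≠ -1`. A zero `x₀` of `f` then keeps `A₋` from being `A₊ • f`: the odd function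
`⟪·, x₀⟫` does not vanish at `x₀`.
-/

noncomputable section

/-- The even continuous functions on S². -/
def Aplus : Set (S2 → ℂ) := {f | Continuous f ∧ ∀ x, f (negS x) = f x}

open Complex

theorem Complex.exists_continuous_exp_eq {A : Type*} [TopologicalSpace A]
    [SimplyConnectedSpace A] [LocallyPathConnectedSpace A] {f : A → ℂ} (hf : Continuous f)
    (hf₀ : ∀ a, f a ≠ 0) : ∃ θ : A → ℂ, Continuous θ ∧ ∀ a, exp (θ a) = f a := by
  obtain ⟨a₀⟩ : Nonempty A := inferInstance
  obtain ⟨θ, ⟨-, hθ⟩, -⟩ := isCoveringMapOn_exp.existsUnique_continuousMap_lifts ⟨f, hf⟩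
    (exp_log (hf₀ a₀)) hf₀
  exact ⟨θ, θ.continuous, congrFun hθ⟩

theorem Complex.not_forall_exp_comp_neg_eq_neg {X : Type*} [TopologicalSpace X]
    [PreconnectedSpace X] [Nonempty X] [InvolutiveNeg X] [ContinuousNeg X] {θ : X → ℂ}
    (hθ : Continuous θ) : ¬ ∀ x, exp (θ (-x)) = -exp (θ x) := by
  intro h
  obtain ⟨x₀⟩ : Nonempty X := inferInstance
  set d : X → ℂ := fun x => θ (-x) - θ x
  have hd : ∀ x, d x - d x₀ ∈ AddSubgroup.zmultiples (2 * Real.pi * I) := by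
    intro x
    have : exp (d x - d x₀) = 1 := by
      simp only [d, exp_sub, h]
      field_simp [exp_ne_zero]
    obtain ⟨n, hn⟩ := exp_eq_one_iff.mp this
    exact AddSubgroup.mem_zmultiples_iff.mpr ⟨n, by rw [hn, zsmul_eq_mul]⟩
  have hconst : d (-x₀) - d x₀ = d x₀ - d x₀ :=
    isPreconnected_univ.constant_of_mapsTo
      (isDiscrete_iff_discreteTopology.mpr (NormedSpace.discreteTopology_zmultiples _))
      (by fun_prop) (fun x _ => hd x) trivial trivial
  have hzero : d x₀ = 0 := by
    simp only [d, neg_neg] at hconst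
    linear_combination -hconst / 2
  have := h x₀
  rw [← sub_eq_zero.mp hzero] at this
  exact exp_ne_zero _ (by linear_combination this / 2)

def planeVec (z : ℂ) : EuclideanSpace ℝ (Fin 3) := !₂[z.re, z.im, 1 - ‖z‖ ^ 2]

lemma continuous_planeVec : Continuous planeVec := by
  unfold planeVec; fun_prop

lemma planeVec_ne_zero (z : ℂ) : planeVec z ≠ 0 := by
  intro h
  have h₀ : z.re = 0 := congrArg (· 0) h
  have h₁ : z.im = 0 := congrArg (· 1) h
  have h₂ : 1 - ‖z‖ ^ 2 = 0 := congrArg (· 2) h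
  have hz : z = 0 := Complex.ext h₀ h₁
  simp [hz] at h₂

lemma planeVec_neg {z : ℂ} (hz : ‖z‖ = 1) : planeVec (-z) = -planeVec z := by
  ext i; fin_cases i <;> simp [planeVec, hz]

def planeToSphere (z : ℂ) : S2 :=
  ⟨‖planeVec z‖⁻¹ • planeVec z, by simp [norm_smul, planeVec_ne_zero]⟩

lemma continuous_planeToSphere : Continuous planeToSphere :=
  (((continuous_norm.comp continuous_planeVec).inv₀ fun z => norm_ne_zero_iff.mpr
    (planeVec_ne_zero z)).smul continuous_planeVec).subtype_mk _

lemma planeToSphere_neg {z : ℂ} (hz : ‖z‖ = 1) :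
    planeToSphere (-z) = negS (planeToSphere z) := by
  ext1; simp [planeToSphere, negS, planeVec_neg hz]

theorem exists_zero_of_odd {f : S2 → ℂ} (hf : Continuous f) (hodd : ∀ x, f (negS x) = -f x) :
    ∃ x, f x = 0 := by
  by_contra! hf₀
  obtain ⟨θ, hθ, hθf⟩ :=
    exists_continuous_exp_eq (hf.comp continuous_planeToSphere) fun z => hf₀ _
  refine not_forall_exp_comp_neg_eq_neg (X := Circle) (θ := fun z => θ z) (by fun_prop)
    fun z => ?_
  simp only [hθf, Function.comp_apply, Circle.coe_neg, planeToSphere_neg (Circle.norm_coe z), hodd]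

theorem exists_mem_Aminus_ne_zero (x₀ : S2) : ∃ g ∈ Aminus, g x₀ ≠ 0 := by
  refine ⟨fun x => (inner ℝ (x : EuclideanSpace ℝ (Fin 3)) x₀ : ℂ), ⟨by fun_prop, fun x => ?_⟩, ?_⟩
  · simp [negS, inner_neg_left]
  · simp

/-- Every odd continuous function on S² has a zero; consequently A₋ is not a free
A₊-module of rank one: no odd continuous f makes g ↦ g·f a bijection A₊ → A₋. -/
theorem stmt8 :
    (∀ f : S2 → ℂ, Continuous f → (∀ x, f (negS x) = -f x) → ∃ x, f x = 0) ∧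
    ¬ ∃ f : S2 → ℂ, (Continuous f ∧ ∀ x, f (negS x) = -f x) ∧
        Set.BijOn (fun g : S2 → ℂ => fun x => g x * f x) Aplus Aminus := by
  refine ⟨fun _ => exists_zero_of_odd, ?_⟩
  rintro ⟨f, ⟨hf, hodd⟩, hbij⟩
  obtain ⟨x₀, hx₀⟩ := exists_zero_of_odd hf hodd
  obtain ⟨g, hg, hgx₀⟩ := exists_mem_Aminus_ne_zero x₀
  obtain ⟨h, -, rfl⟩ := hbij.surjOn hg
  simp [hx₀] at hgx₀
end
end
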